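/- Marginal coverage of hierarchical full conformal prediction: Suppose Z̃_1,…,Z̃_{K+1} satisfies hierarchical exchangeability, and let Z_test = (X_test, Y_test) = Z_{K+1,1}. Let 𝒜 be a hierarchically symmetric algorithm mapping 𝒵̃^{K+1} to measurable score functions 𝒵 → ℝ, write s^{z̃} = 𝒜(Z̃_1,…,Z̃_K, z̃), let C̃ = { z̃ ∈ 𝒵̃ : s^{z̃}(P₁z̃) ≤ Q_{1−α}( Σ_{k=1}^{K} Σ_{i=1}^{N_k} (1/((K+1)N_k)) δ_{s^{z̃}(Z_{k,i})} + (1/(K+1)) δ_{+∞} ) }, where P₁ projects a finite sequence to its first entry, and define Ĉ(X_test) = {y : (X_test, y) ∈ P₁C̃}. Then P(Y_test ∈ Ĉ(X_test)) ≥ 1 − α. -/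

import Mathlib

open MeasureTheory ProbabilityTheory
open scoped ENNReal

noncomputable section

/-- Extend a permutation of `Fin m` to `ℕ` by the identity outside `{0, …, m-1}`. -/
def permExt {m : ℕ} (σ : Equiv.Perm (Fin m)) : ℕ → ℕ :=
  fun i => if h : i < m then (σ ⟨i, h⟩ : ℕ) else i

/-- The representation of the groups `0, …, L-1` of a hierarchical data set:
group `k` is recorded as the pair of its size `N k ω` and its sequence of observations. -/
def hierData {Ω 𝒵 : Type*} (L : ℕ) (N : ℕ → Ω → ℕ) (Z : ℕ → ℕ → Ω → 𝒵) :
    Ω → Fin L → ℕ × (ℕ → 𝒵) :=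
  fun ω k => (N k.1 ω, fun i => Z k.1 i ω)

/-- Hierarchical exchangeability (Definition 1.1) of the groups `0, …, L-1`:
(i) the groups are exchangeable with each other, and (ii) for each `k` and each `m`
with `P(N_k = m) > 0`, conditionally on `N_k = m` the first `m` observations within
group `k` are exchangeable. -/
def HierExch {Ω 𝒵 : Type*} [MeasurableSpace Ω] [MeasurableSpace 𝒵] (L : ℕ)
    (P : Measure Ω) (N : ℕ → Ω → ℕ) (Z : ℕ → ℕ → Ω → 𝒵) : Prop :=
  (∀ σ : Equiv.Perm (Fin L),
      Measure.map (fun ω => fun k : Fin L => hierData L N Z ω (σ k)) P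
        = Measure.map (hierData L N Z) P) ∧
  (∀ k, k < L → ∀ m : ℕ, 0 < P {ω | N k ω = m} → ∀ σ : Equiv.Perm (Fin m),
      Measure.map
          (hierData L N fun k' i => if k' = k then Z k' (permExt σ i) else Z k' i)
          (ProbabilityTheory.cond P {ω | N k ω = m})
        = Measure.map (hierData L N Z) (ProbabilityTheory.cond P {ω | N k ω = m}))

/-- The `(1-β)`-quantile `Q_{1-β}(μ) = inf {t : μ((-∞, t]) ≥ 1-β}` of a distribution `μ`
on the extended real line. -/
def erealQuantile (β : ℝ) (μ : Measure EReal) : EReal :=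
  sInf {t : EReal | ENNReal.ofReal β ≤ μ (Set.Iic t)}

/-- The HCP threshold: the `(1-α)`-quantile of the weighted empirical distribution
`Σ_{k=K₀}^{K-1} Σ_{i<n k} (1/((K₁+1)·(n k))) δ_{sc k i} + (1/(K₁+1)) δ_{+∞}`,
where `K₁ = K - K₀`. -/
def hcpThreshold (α : ℝ) (K₀ K : ℕ) (n : ℕ → ℕ) (sc : ℕ → ℕ → ℝ) : EReal :=
  erealQuantile (1 - α)
    ((∑ k ∈ Finset.Ico K₀ K, ∑ i ∈ Finset.range (n k),
        (((K - K₀ + 1 : ℕ) : ℝ≥0∞) * (n k : ℝ≥0∞))⁻¹ • Measure.dirac ((sc k i : EReal)))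
      + (((K - K₀ + 1 : ℕ) : ℝ≥0∞))⁻¹ • Measure.dirac (⊤ : EReal))

/-- An algorithm (or function) of `L` groups is hierarchically symmetric if its output is
unchanged by any permutation of its `L` group arguments and by any permutation of the
entries within any single group argument. -/
def HierInvariant {𝒵 β : Type*} (L : ℕ) (q : (Fin L → ℕ × (ℕ → 𝒵)) → β) : Prop :=
  (∀ (d : Fin L → ℕ × (ℕ → 𝒵)) (σ : Equiv.Perm (Fin L)), q (fun k => d (σ k)) = q d) ∧
  (∀ (d : Fin L → ℕ × (ℕ → 𝒵)) (k : Fin L) (σ : Equiv.Perm (Fin (d k).1)),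
      q (Function.update d k ((d k).1, fun i => (d k).2 (permExt σ i))) = q d)


/-!
Let `d` be the full data set, test group included, and `Q(d)` the `(1-α)`-quantile of the
empirical score distribution `μ_d` that gives every group mass `1/(K+1)`, spread evenly over its
observations. Deterministically `μ_d (-∞, Q(d)] ≥ 1-α`, and `μ_d (-∞, Q(d)]` is the average over
the groups `k` of the fraction `G_k` of observations of group `k` scoring at most `Q(d)`. As `𝒜`
and hence `Q` are hierarchically symmetric, exchangeability of the groups gives `E G_k = E G_K`,
and exchangeability within the test group, conditionally on its size, gives
`E G_K = P(s(Z_test) ≤ Q(d))`. Finally, moving the test group's mass to `+∞` only raises the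
quantile, so on the event `s(Z_test) ≤ Q(d)` the true test group witnesses `Y_test ∈ Ĉ(X_test)`.
-/

theorem ofReal_le_measure_Iic_erealQuantile {β : ℝ} {μ : Measure EReal} [IsFiniteMeasure μ]
    (h : ENNReal.ofReal β ≤ μ Set.univ) :
    ENNReal.ofReal β ≤ μ (Set.Iic (erealQuantile β μ)) := by
  set S := {t : EReal | ENNReal.ofReal β ≤ μ (Set.Iic t)}
  have hS : S.Nonempty := ⟨⊤, by simpa [S] using h⟩
  obtain ⟨u, hu_anti, hu_lim, hu_mem⟩ := exists_seq_tendsto_sInf hS (OrderBot.bddBelow S)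
  have hIic : Set.Iic (sInf S) = ⋂ n, Set.Iic (u n) := by
    rw [tendsto_nhds_unique hu_lim (tendsto_atTop_iInf hu_anti)]
    ext x
    simp [le_iInf_iff]
  -- right-continuity of the distribution function at the quantile
  have hcont : μ (⋂ n, Set.Iic (u n)) = ⨅ n, μ (Set.Iic (u n)) :=
    Antitone.measure_iInter (fun _ _ h => Set.Iic_subset_Iic.2 (hu_anti h))
      (fun n => measurableSet_Iic.nullMeasurableSet)
      ⟨0, measure_ne_top μ _⟩
  rw [erealQuantile, hIic, hcont]
  exact le_iInf hu_mem

theorem erealQuantile_le_of_le_measure_Iic {β : ℝ} {μ : Measure EReal} {t : EReal}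
    (h : ENNReal.ofReal β ≤ μ (Set.Iic t)) : erealQuantile β μ ≤ t :=
  sInf_le h

theorem erealQuantile_le_erealQuantile {β : ℝ} {μ ν : Measure EReal}
    (h : ∀ t, ν (Set.Iic t) ≤ μ (Set.Iic t)) :
    erealQuantile β μ ≤ erealQuantile β ν :=
  sInf_le_sInf fun _ ht => ht.trans (h _)

theorem Measurable.erealQuantile {α : Type*} [MeasurableSpace α] {κ : α → Measure EReal}
    (hκ : ∀ t, Measurable fun a => κ a (Set.Iic t)) (β : ℝ) :
    Measurable fun a => erealQuantile β (κ a) := by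
  refine measurable_of_Iio fun t => ?_
  set good : EReal → Set α := fun s => {a | s < t ∧ ENNReal.ofReal β ≤ κ a (Set.Iic s)}
  have hgood : ∀ s, MeasurableSet (good s) := fun s =>
    (MeasurableSet.const _).inter (hκ s measurableSet_Ici)
  -- a quantile below `t` is witnessed by `⊥` or by a rational point below `t`
  suffices h : (fun a => _root_.erealQuantile β (κ a)) ⁻¹' Set.Iio t
      = (⋃ q : ℚ, good ((q : ℝ) : EReal)) ∪ good ⊥ by
    rw [h]
    exact (MeasurableSet.iUnion fun q => hgood _).union (hgood ⊥)
  ext a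
  simp only [Set.mem_preimage, Set.mem_Iio, Set.mem_union, Set.mem_iUnion, good,
    Set.mem_ofPred_eq]
  constructor
  · intro ha
    obtain ⟨s, hs, hst⟩ := (sInf_lt_iff (α := EReal)).1 ha
    induction s using EReal.rec with
    | bot => exact Or.inr ⟨hst, hs⟩
    | top => exact absurd hst (not_lt.2 le_top)
    | coe x =>
      obtain ⟨q, hxq, hqt⟩ : ∃ q : ℚ, (x : EReal) ≤ ((q : ℝ) : EReal) ∧ ((q : ℝ) : EReal) < t := by
        induction t using EReal.rec with
        | bot => exact absurd hst (not_lt_bot)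
        | top =>
          obtain ⟨q, hq⟩ := exists_rat_gt x
          exact ⟨q, by exact_mod_cast hq.le, EReal.coe_lt_top _⟩
        | coe y =>
          obtain ⟨q, hxq, hqy⟩ := exists_rat_btwn (EReal.coe_lt_coe_iff.1 hst)
          exact ⟨q, by exact_mod_cast hxq.le, by exact_mod_cast hqy⟩
      exact Or.inl ⟨q, hqt, hs.trans (measure_mono (Set.Iic_subset_Iic.2 hxq))⟩
  · rintro (⟨q, hqt, hq⟩ | ⟨hbot, hbot'⟩)
    · exact (erealQuantile_le_of_le_measure_Iic hq).trans_lt hqt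
    · exact (erealQuantile_le_of_le_measure_Iic hbot').trans_lt hbot

theorem Finset.sum_range_permExt {M : Type*} [AddCommMonoid M] {m : ℕ}
    (σ : Equiv.Perm (Fin m)) (f : ℕ → M) :
    ∑ i ∈ Finset.range m, f (permExt σ i) = ∑ i ∈ Finset.range m, f i := by
  rw [← Fin.sum_univ_eq_sum_range (fun i => f (permExt σ i)), ← Fin.sum_univ_eq_sum_range f,
    ← Equiv.sum_comp σ (fun i : Fin m => f i)]
  refine Finset.sum_congr rfl fun i _ => ?_
  simp [permExt]

theorem Measurable.sum_range {α M : Type*} [MeasurableSpace α] [AddCommMonoid M]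
    [MeasurableSpace M] [MeasurableAdd₂ M] {n : α → ℕ} (hn : Measurable n) {f : ℕ → α → M}
    (hf : ∀ i, Measurable (f i)) :
    Measurable fun a => ∑ i ∈ Finset.range (n a), f i a := by
  have h : Measurable fun p : α × ℕ => ∑ i ∈ Finset.range p.2, f i p.1 :=
    measurable_from_prod_countable_left fun m =>
      Finset.measurable_sum (Finset.range m) fun i _ => hf i
  exact h.comp (measurable_id.prodMk hn)

section Scores

variable {𝒵 : Type*} {L : ℕ}

def permGroup (d : Fin L → ℕ × (ℕ → 𝒵)) (j : Fin L) {m : ℕ} (σ : Equiv.Perm (Fin m)) :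
    Fin L → ℕ × (ℕ → 𝒵) :=
  Function.update d j ((d j).1, fun i => (d j).2 (permExt σ i))

def groupEmpirical (s : 𝒵 → ℝ) (d : Fin L → ℕ × (ℕ → 𝒵)) : Measure EReal :=
  ∑ k, ∑ i ∈ Finset.range (d k).1,
    ((L : ℝ≥0∞) * ((d k).1 : ℝ≥0∞))⁻¹ • Measure.dirac ((s ((d k).2 i) : EReal))

theorem groupEmpirical_apply (s : 𝒵 → ℝ) (d : Fin L → ℕ × (ℕ → 𝒵)) {T : Set EReal}
    (hT : MeasurableSet T) :
    groupEmpirical s d T = (L : ℝ≥0∞)⁻¹ * ∑ k, ((d k).1 : ℝ≥0∞)⁻¹ *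
      ∑ i ∈ Finset.range (d k).1, T.indicator 1 ((s ((d k).2 i) : EReal)) := by
  simp only [groupEmpirical, Measure.coe_finsetSum, Finset.sum_apply, Measure.smul_apply,
    Measure.dirac_apply' _ hT, smul_eq_mul, Finset.mul_sum, ← mul_assoc]
  refine Finset.sum_congr rfl fun k _ => Finset.sum_congr rfl fun i _ => ?_
  rw [ENNReal.mul_inv (Or.inr (ENNReal.natCast_ne_top _)) (Or.inl (ENNReal.natCast_ne_top _))]

theorem groupEmpirical_univ [NeZero L] (s : 𝒵 → ℝ) {d : Fin L → ℕ × (ℕ → 𝒵)}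
    (hd : ∀ k, 1 ≤ (d k).1) : groupEmpirical s d Set.univ = 1 := by
  have hgroup : ∀ k, ((d k).1 : ℝ≥0∞)⁻¹ * ∑ i ∈ Finset.range (d k).1,
      Set.univ.indicator (1 : EReal → ℝ≥0∞) ((s ((d k).2 i) : EReal)) = 1 := fun k => by
    simp only [Set.indicator_univ, Pi.one_apply, Finset.sum_const, Finset.card_range,
      nsmul_eq_mul, mul_one]
    exact ENNReal.inv_mul_cancel (Nat.cast_ne_zero.2 (Nat.one_le_iff_ne_zero.1 (hd k)))
      (ENNReal.natCast_ne_top _)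
  simp only [groupEmpirical_apply s d MeasurableSet.univ, hgroup, Finset.sum_const,
    Finset.card_univ, Fintype.card_fin, nsmul_eq_mul, mul_one]
  exact ENNReal.inv_mul_cancel (Nat.cast_ne_zero.2 (NeZero.ne L)) (ENNReal.natCast_ne_top _)

theorem groupEmpirical_comp_perm (s : 𝒵 → ℝ) (d : Fin L → ℕ × (ℕ → 𝒵))
    (σ : Equiv.Perm (Fin L)) : groupEmpirical s (fun k => d (σ k)) = groupEmpirical s d :=
  Equiv.sum_comp σ (fun k => ∑ i ∈ Finset.range (d k).1,
    ((L : ℝ≥0∞) * ((d k).1 : ℝ≥0∞))⁻¹ • Measure.dirac ((s ((d k).2 i) : EReal)))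

theorem groupEmpirical_permGroup (s : 𝒵 → ℝ) (d : Fin L → ℕ × (ℕ → 𝒵)) (j : Fin L)
    {m : ℕ} (σ : Equiv.Perm (Fin m)) (hm : (d j).1 = m) :
    groupEmpirical s (permGroup d j σ) = groupEmpirical s d := by
  refine Finset.sum_congr rfl fun k _ => ?_
  rcases eq_or_ne k j with rfl | hkj
  · simp only [permGroup, Function.update_self, hm]
    exact Finset.sum_range_permExt σ fun i =>
      ((L : ℝ≥0∞) * (m : ℝ≥0∞))⁻¹ • Measure.dirac ((s ((d k).2 i) : EReal))
  · simp only [permGroup, Function.update_of_ne hkj]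

variable (𝒜 : (Fin L → ℕ × (ℕ → 𝒵)) → 𝒵 → ℝ) (β : ℝ)

def fullQuantile (d : Fin L → ℕ × (ℕ → 𝒵)) : EReal :=
  erealQuantile β (groupEmpirical (𝒜 d) d)

def coverSet (k : Fin L) (i : ℕ) : Set (Fin L → ℕ × (ℕ → 𝒵)) :=
  {d | (𝒜 d ((d k).2 i) : EReal) ≤ fullQuantile 𝒜 β d}

def groupCoverage (k : Fin L) (d : Fin L → ℕ × (ℕ → 𝒵)) : ℝ≥0∞ :=
  ((d k).1 : ℝ≥0∞)⁻¹ * ∑ i ∈ Finset.range (d k).1, (coverSet 𝒜 β k i).indicator 1 d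

theorem groupEmpirical_Iic_fullQuantile (d : Fin L → ℕ × (ℕ → 𝒵)) :
    groupEmpirical (𝒜 d) d (Set.Iic (fullQuantile 𝒜 β d))
      = (L : ℝ≥0∞)⁻¹ * ∑ k, groupCoverage 𝒜 β k d := by
  simp only [groupEmpirical_apply _ d measurableSet_Iic, groupCoverage, Set.indicator_apply,
    coverSet, Set.mem_Iic, Set.mem_ofPred_eq, Pi.one_apply]

variable {𝒜}

theorem coverSet_comp_perm (hsym : HierInvariant L 𝒜) (d : Fin L → ℕ × (ℕ → 𝒵))
    (σ : Equiv.Perm (Fin L)) (k : Fin L) (i : ℕ) :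
    (fun k => d (σ k)) ∈ coverSet 𝒜 β k i ↔ d ∈ coverSet 𝒜 β (σ k) i := by
  simp only [coverSet, fullQuantile, Set.mem_ofPred_eq, hsym.1 d σ, groupEmpirical_comp_perm]

theorem groupCoverage_comp_perm (hsym : HierInvariant L 𝒜) (d : Fin L → ℕ × (ℕ → 𝒵))
    (σ : Equiv.Perm (Fin L)) (k : Fin L) :
    groupCoverage 𝒜 β k (fun k => d (σ k)) = groupCoverage 𝒜 β (σ k) d := by
  classical
  simp only [groupCoverage, Set.indicator_apply, coverSet_comp_perm β hsym d σ, Pi.one_apply]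

theorem mem_coverSet_permGroup (hsym : HierInvariant L 𝒜) (d : Fin L → ℕ × (ℕ → 𝒵))
    (j : Fin L) {m : ℕ} (σ : Equiv.Perm (Fin m)) (hm : (d j).1 = m) (i : ℕ) :
    permGroup d j σ ∈ coverSet 𝒜 β j i ↔ d ∈ coverSet 𝒜 β j (permExt σ i) := by
  subst hm
  simp only [coverSet, fullQuantile, Set.mem_ofPred_eq, groupEmpirical_permGroup _ d j σ rfl]
  rw [show 𝒜 (permGroup d j σ) = 𝒜 d from hsym.2 d j σ]
  simp only [permGroup, Function.update_self]

end Scores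

section Measurability

variable {𝒵 : Type*} [MeasurableSpace 𝒵] {L : ℕ}

theorem measurable_permGroup (j : Fin L) {m : ℕ} (σ : Equiv.Perm (Fin m)) :
    Measurable fun d : Fin L → ℕ × (ℕ → 𝒵) => permGroup d j σ := by
  refine measurable_pi_lambda _ fun k => ?_
  rcases eq_or_ne k j with rfl | hkj
  · simp only [permGroup, Function.update_self]
    exact (measurable_pi_apply k).fst.prodMk (measurable_pi_lambda _ fun i =>
      (measurable_pi_apply (permExt σ i)).comp (measurable_pi_apply k).snd)
  · simp only [permGroup, Function.update_of_ne hkj]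
    exact measurable_pi_apply k

variable {𝒜 : (Fin L → ℕ × (ℕ → 𝒵)) → 𝒵 → ℝ}
  (h𝒜 : Measurable fun p : (Fin L → ℕ × (ℕ → 𝒵)) × 𝒵 => 𝒜 p.1 p.2)
include h𝒜

theorem measurable_score (k : Fin L) (i : ℕ) :
    Measurable fun d : Fin L → ℕ × (ℕ → 𝒵) => (𝒜 d ((d k).2 i) : EReal) :=
  measurable_coe_real_ereal.comp <| h𝒜.comp <|
    measurable_id.prodMk ((measurable_pi_apply i).comp (measurable_pi_apply k).snd)

theorem measurable_groupEmpirical_Iic (t : EReal) :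
    Measurable fun d : Fin L → ℕ × (ℕ → 𝒵) => groupEmpirical (𝒜 d) d (Set.Iic t) := by
  simp only [groupEmpirical_apply _ _ measurableSet_Iic]
  refine measurable_const.mul (Finset.measurable_sum _ fun k _ => ?_)
  have hn : Measurable fun d : Fin L → ℕ × (ℕ → 𝒵) => (d k).1 := (measurable_pi_apply k).fst
  exact (measurable_from_nat (f := fun n : ℕ => (n : ℝ≥0∞)⁻¹).comp hn).mul <|
    Measurable.sum_range hn fun i =>
      (measurable_one.indicator measurableSet_Iic).comp (measurable_score h𝒜 k i)

theorem measurable_fullQuantile (β : ℝ) : Measurable (fullQuantile 𝒜 β) :=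
  Measurable.erealQuantile (measurable_groupEmpirical_Iic h𝒜) β

theorem measurableSet_coverSet (β : ℝ) (k : Fin L) (i : ℕ) :
    MeasurableSet (coverSet 𝒜 β k i) :=
  measurableSet_le (measurable_score h𝒜 k i) (measurable_fullQuantile h𝒜 β)

theorem measurable_groupCoverage (β : ℝ) (k : Fin L) : Measurable (groupCoverage 𝒜 β k) := by
  have hn : Measurable fun d : Fin L → ℕ × (ℕ → 𝒵) => (d k).1 := (measurable_pi_apply k).fst
  exact (measurable_from_nat (f := fun n : ℕ => (n : ℝ≥0∞)⁻¹).comp hn).mul <|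
    Measurable.sum_range hn fun i => measurable_one.indicator (measurableSet_coverSet h𝒜 β k i)

end Measurability

section Coverage

variable {𝒵 : Type*} [MeasurableSpace 𝒵] {L : ℕ} {𝒜 : (Fin L → ℕ × (ℕ → 𝒵)) → 𝒵 → ℝ}
  (h𝒜 : Measurable fun p : (Fin L → ℕ × (ℕ → 𝒵)) × 𝒵 => 𝒜 p.1 p.2) (hsym : HierInvariant L 𝒜)
  {ρ : Measure (Fin L → ℕ × (ℕ → 𝒵))} (β : ℝ)
include h𝒜 hsym

theorem lintegral_groupCoverage_eq_of_map_perm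
    (hgroup : ∀ σ : Equiv.Perm (Fin L), ρ.map (fun d k => d (σ k)) = ρ) (k j : Fin L) :
    ∫⁻ d, groupCoverage 𝒜 β k d ∂ρ = ∫⁻ d, groupCoverage 𝒜 β j d ∂ρ := by
  set σ := Equiv.swap j k
  have hσ : Measurable fun (d : Fin L → ℕ × (ℕ → 𝒵)) k => d (σ k) :=
    measurable_pi_lambda _ fun k => measurable_pi_apply (σ k)
  calc ∫⁻ d, groupCoverage 𝒜 β k d ∂ρ
      = ∫⁻ d, groupCoverage 𝒜 β j (fun k => d (σ k)) ∂ρ := by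
        simp only [groupCoverage_comp_perm β hsym, σ, Equiv.swap_apply_left]
    _ = ∫⁻ d, groupCoverage 𝒜 β j d ∂(ρ.map fun d k => d (σ k)) :=
        (lintegral_map (measurable_groupCoverage h𝒜 β j) hσ).symm
    _ = ∫⁻ d, groupCoverage 𝒜 β j d ∂ρ := by rw [hgroup]

variable {j : Fin L}
  (hwithin : ∀ (m : ℕ) (σ : Equiv.Perm (Fin m)),
    (ρ.restrict {d | (d j).1 = m}).map (fun d => permGroup d j σ) = ρ.restrict {d | (d j).1 = m})
include hwithin

theorem setLIntegral_indicator_coverSet_eq {m i : ℕ} (hi : i < m) :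
    ∫⁻ d in {d | (d j).1 = m}, (coverSet 𝒜 β j i).indicator 1 d ∂ρ
      = ∫⁻ d in {d | (d j).1 = m}, (coverSet 𝒜 β j 0).indicator 1 d ∂ρ := by
  have hA : MeasurableSet {d : Fin L → ℕ × (ℕ → 𝒵) | (d j).1 = m} :=
    (measurable_pi_apply j).fst (measurableSet_singleton m)
  set σ : Equiv.Perm (Fin m) := Equiv.swap ⟨0, by omega⟩ ⟨i, hi⟩
  have hσ : permExt σ 0 = i := by simp [permExt, σ, show 0 < m by omega]
  have hperm : Set.EqOn ((coverSet 𝒜 β j i).indicator 1 : _ → ℝ≥0∞)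
      (fun d => (coverSet 𝒜 β j 0).indicator 1 (permGroup d j σ)) {d | (d j).1 = m} :=
    fun d hd => by
    have hmem : permGroup d j σ ∈ coverSet 𝒜 β j 0 ↔ d ∈ coverSet 𝒜 β j i := by
      rw [mem_coverSet_permGroup β hsym d j σ hd, hσ]
    simp only [Set.indicator, Pi.one_apply]
    classical exact if_congr hmem.symm rfl rfl
  rw [setLIntegral_congr_fun hA hperm, ← lintegral_map
    ((measurable_one.indicator (measurableSet_coverSet h𝒜 β j 0))) (measurable_permGroup j σ),
    hwithin]

theorem setLIntegral_groupCoverage_eq {m : ℕ} (hm : 0 < m) :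
    ∫⁻ d in {d | (d j).1 = m}, groupCoverage 𝒜 β j d ∂ρ
      = ∫⁻ d in {d | (d j).1 = m}, (coverSet 𝒜 β j 0).indicator 1 d ∂ρ := by
  have hA : MeasurableSet {d : Fin L → ℕ × (ℕ → 𝒵) | (d j).1 = m} :=
    (measurable_pi_apply j).fst (measurableSet_singleton m)
  have hind : ∀ i, Measurable ((coverSet 𝒜 β j i).indicator 1 : _ → ℝ≥0∞) := fun i =>
    measurable_one.indicator (measurableSet_coverSet h𝒜 β j i)
  calc ∫⁻ d in {d | (d j).1 = m}, groupCoverage 𝒜 β j d ∂ρ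
      = ∫⁻ d in {d | (d j).1 = m},
          (m : ℝ≥0∞)⁻¹ * ∑ i ∈ Finset.range m, (coverSet 𝒜 β j i).indicator 1 d ∂ρ :=
        setLIntegral_congr_fun hA fun d hd => by rw [groupCoverage, hd]
    _ = (m : ℝ≥0∞)⁻¹ * ∑ i ∈ Finset.range m,
          ∫⁻ d in {d | (d j).1 = m}, (coverSet 𝒜 β j i).indicator 1 d ∂ρ := by
        rw [lintegral_const_mul _ (Finset.measurable_sum _ fun i _ => hind i),
          lintegral_finsetSum _ fun i _ => hind i]
    _ = (m : ℝ≥0∞)⁻¹ *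
          (m * ∫⁻ d in {d | (d j).1 = m}, (coverSet 𝒜 β j 0).indicator 1 d ∂ρ) := by
        rw [Finset.sum_congr rfl fun i hi => setLIntegral_indicator_coverSet_eq h𝒜 hsym β
          hwithin (Finset.mem_range.1 hi), Finset.sum_const, Finset.card_range, nsmul_eq_mul]
    _ = ∫⁻ d in {d | (d j).1 = m}, (coverSet 𝒜 β j 0).indicator 1 d ∂ρ :=
        ENNReal.inv_mul_cancel_left (Nat.cast_ne_zero.2 hm.ne') (ENNReal.natCast_ne_top m)

theorem lintegral_groupCoverage_eq_measure_coverSet (hsize : ρ {d | (d j).1 = 0} = 0) :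
    ∫⁻ d, groupCoverage 𝒜 β j d ∂ρ = ρ (coverSet 𝒜 β j 0) := by
  have hfib : ∀ m, MeasurableSet {d : Fin L → ℕ × (ℕ → 𝒵) | (d j).1 = m} := fun m =>
    (measurable_pi_apply j).fst (measurableSet_singleton m)
  have hdisj := pairwise_disjoint_fiber fun d : Fin L → ℕ × (ℕ → 𝒵) => (d j).1
  have hcover : (⋃ m, {d : Fin L → ℕ × (ℕ → 𝒵) | (d j).1 = m}) = Set.univ := by
    ext d; simp
  rw [← lintegral_indicator_one (measurableSet_coverSet h𝒜 β j 0), ← setLIntegral_univ,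
    ← setLIntegral_univ (f := (coverSet 𝒜 β j 0).indicator 1), ← hcover,
    lintegral_iUnion hfib hdisj, lintegral_iUnion hfib hdisj]
  refine tsum_congr fun m => ?_
  rcases m.eq_zero_or_pos with rfl | hm
  · simp only [Measure.restrict_eq_zero.2 hsize, lintegral_zero_measure]
  · exact setLIntegral_groupCoverage_eq h𝒜 hsym β hwithin hm

end Coverage

theorem ofReal_le_measure_coverSet {𝒵 : Type*} [MeasurableSpace 𝒵] {L : ℕ}
    {𝒜 : (Fin L → ℕ × (ℕ → 𝒵)) → 𝒵 → ℝ}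
    (h𝒜 : Measurable fun p : (Fin L → ℕ × (ℕ → 𝒵)) × 𝒵 => 𝒜 p.1 p.2)
    (hsym : HierInvariant L 𝒜) {ρ : Measure (Fin L → ℕ × (ℕ → 𝒵))} [IsProbabilityMeasure ρ]
    (hsize : ∀ᵐ d ∂ρ, ∀ k, 1 ≤ (d k).1)
    (hgroup : ∀ σ : Equiv.Perm (Fin L), ρ.map (fun d k => d (σ k)) = ρ) (j : Fin L)
    (hwithin : ∀ (m : ℕ) (σ : Equiv.Perm (Fin m)),
      (ρ.restrict {d | (d j).1 = m}).map (fun d => permGroup d j σ)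
        = ρ.restrict {d | (d j).1 = m})
    {β : ℝ} (hβ : β ≤ 1) :
    ENNReal.ofReal β ≤ ρ (coverSet 𝒜 β j 0) := by
  have : NeZero L := NeZero.of_pos j.pos
  have hpointwise : ∀ᵐ d ∂ρ, ENNReal.ofReal β ≤ (L : ℝ≥0∞)⁻¹ * ∑ k, groupCoverage 𝒜 β k d :=
    hsize.mono fun d hd => by
      have : IsProbabilityMeasure (groupEmpirical (𝒜 d) d) := ⟨groupEmpirical_univ _ hd⟩
      rw [← groupEmpirical_Iic_fullQuantile]
      exact ofReal_le_measure_Iic_erealQuantile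
        (by rw [measure_univ]; exact ENNReal.ofReal_le_one.2 hβ)
  have hsize_j : ρ {d | (d j).1 = 0} = 0 := by
    simpa using ae_iff.1 (hsize.mono fun d hd => Nat.one_le_iff_ne_zero.1 (hd j))
  have hG := measurable_groupCoverage h𝒜 β
  calc ENNReal.ofReal β
      ≤ ∫⁻ d, (L : ℝ≥0∞)⁻¹ * ∑ k, groupCoverage 𝒜 β k d ∂ρ := by
        simpa using lintegral_mono_ae hpointwise
    _ = (L : ℝ≥0∞)⁻¹ * ∑ k, ∫⁻ d, groupCoverage 𝒜 β k d ∂ρ := by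
        rw [lintegral_const_mul _ (Finset.measurable_sum _ fun k _ => hG k),
          lintegral_finsetSum _ fun k _ => hG k]
    _ = (L : ℝ≥0∞)⁻¹ * (L * ∫⁻ d, groupCoverage 𝒜 β j d ∂ρ) := by
        simp only [lintegral_groupCoverage_eq_of_map_perm h𝒜 hsym β hgroup _ j,
          Finset.sum_const, Finset.card_univ, Fintype.card_fin, nsmul_eq_mul]
    _ = ∫⁻ d, groupCoverage 𝒜 β j d ∂ρ :=
        ENNReal.inv_mul_cancel_left (Nat.cast_ne_zero.2 (NeZero.ne L)) (ENNReal.natCast_ne_top L)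
    _ = ρ (coverSet 𝒜 β j 0) :=
        lintegral_groupCoverage_eq_measure_coverSet h𝒜 hsym β hwithin hsize_j

theorem permGroup_hierData {Ω 𝒵 : Type*} {L : ℕ} {N : ℕ → Ω → ℕ} {Z : ℕ → ℕ → Ω → 𝒵}
    (j : Fin L) {m : ℕ} (σ : Equiv.Perm (Fin m)) (ω : Ω) :
    permGroup (hierData L N Z ω) j σ
      = hierData L N (fun k i => if k = j.1 then Z k (permExt σ i) else Z k i) ω := by
  funext k
  rcases eq_or_ne k j with rfl | hkj
  · simp [permGroup, hierData]
  · simp [permGroup, hierData, Function.update_of_ne hkj, Fin.val_ne_of_ne hkj]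

section Transfer

variable {Ω 𝒵 : Type*} [MeasurableSpace Ω] [MeasurableSpace 𝒵] {L : ℕ} {P : Measure Ω}
  {N : ℕ → Ω → ℕ} {Z : ℕ → ℕ → Ω → 𝒵}

theorem measurable_hierData (hN : ∀ k, Measurable (N k)) (hZ : ∀ k i, Measurable (Z k i)) :
    Measurable (hierData L N Z) :=
  measurable_pi_lambda _ fun k => (hN k).prodMk (measurable_pi_lambda _ fun i => hZ k i)

theorem ae_one_le_map_hierData (hN : ∀ k ω, 1 ≤ N k ω) (hD : Measurable (hierData L N Z)) :
    ∀ᵐ d ∂P.map (hierData L N Z), ∀ k, 1 ≤ (d k).1 := by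
  refine (ae_map_iff hD.aemeasurable ?_).2 (ae_of_all _ fun ω k => hN k ω)
  simp only [Set.ofPred_forall]
  exact MeasurableSet.iInter fun k => measurableSet_le measurable_const (measurable_pi_apply k).fst

theorem HierExch.map_comp_perm (hexch : HierExch L P N Z) (hD : Measurable (hierData L N Z))
    (σ : Equiv.Perm (Fin L)) :
    (P.map (hierData L N Z)).map (fun d k => d (σ k)) = P.map (hierData L N Z) := by
  rw [Measure.map_map (measurable_pi_lambda _ fun k => measurable_pi_apply (σ k)) hD]
  exact hexch.1 σ

theorem HierExch.map_restrict_permGroup [IsFiniteMeasure P] (hexch : HierExch L P N Z)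
    (hN : ∀ k, Measurable (N k)) (hZ : ∀ k i, Measurable (Z k i)) (j : Fin L) (m : ℕ)
    (σ : Equiv.Perm (Fin m)) :
    ((P.map (hierData L N Z)).restrict {d | (d j).1 = m}).map (fun d => permGroup d j σ)
      = (P.map (hierData L N Z)).restrict {d | (d j).1 = m} := by
  have hD := measurable_hierData (L := L) hN hZ
  have hA : MeasurableSet {d : Fin L → ℕ × (ℕ → 𝒵) | (d j).1 = m} :=
    (measurable_pi_apply j).fst (measurableSet_singleton m)
  rw [Measure.restrict_map hD hA, Measure.map_map (measurable_permGroup j σ) hD]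
  change (P.restrict {ω | N j ω = m}).map _ = (P.restrict {ω | N j ω = m}).map _
  rcases eq_or_ne (P {ω | N j ω = m}) 0 with h0 | hpos
  · simp [Measure.restrict_eq_zero.2 h0]
  · have hcond : P.restrict {ω | N j ω = m} = P {ω | N j ω = m} • P[|{ω | N j ω = m}] := by
      rw [ProbabilityTheory.cond, smul_smul, ENNReal.mul_inv_cancel hpos (measure_ne_top _ _),
        one_smul]
    rw [hcond, Measure.map_smul, Measure.map_smul, Function.comp_def]
    simp only [permGroup_hierData]
    rw [hexch.2 j j.2 m (pos_iff_ne_zero.2 hpos) σ]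

end Transfer

theorem dirac_top_Iic_le (x t : EReal) :
    Measure.dirac (⊤ : EReal) (Set.Iic t) ≤ Measure.dirac x (Set.Iic t) := by
  rw [Measure.dirac_apply' _ measurableSet_Iic, Measure.dirac_apply' _ measurableSet_Iic]
  by_cases ht : (⊤ : EReal) ≤ t
  · simp [Set.indicator_of_mem (Set.mem_Iic.2 ht),
      Set.indicator_of_mem (Set.mem_Iic.2 (le_top.trans ht))]
  · simp [Set.indicator_of_notMem (mt Set.mem_Iic.1 ht)]

theorem erealQuantile_groupEmpirical_le_hcpThreshold {𝒵 : Type*} (α : ℝ) (K : ℕ)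
    (n : ℕ → ℕ) (z : ℕ → ℕ → 𝒵) (s : 𝒵 → ℝ) (hn : 1 ≤ n K) :
    erealQuantile (1 - α) (groupEmpirical s fun k : Fin (K + 1) => (n k, z k))
      ≤ hcpThreshold α 0 K n fun k i => s (z k i) := by
  have hsplit : groupEmpirical s (fun k : Fin (K + 1) => (n k, z k))
      = (∑ k ∈ Finset.range K, ∑ i ∈ Finset.range (n k),
          (((K + 1 : ℕ) : ℝ≥0∞) * n k)⁻¹ • Measure.dirac ((s (z k i) : EReal)))
        + ∑ i ∈ Finset.range (n K),
          (((K + 1 : ℕ) : ℝ≥0∞) * n K)⁻¹ • Measure.dirac ((s (z K i) : EReal)) := by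
    rw [groupEmpirical, Fin.sum_univ_castSucc]
    congr 1
    exact Fin.sum_univ_eq_sum_range (fun k => ∑ i ∈ Finset.range (n k),
      (((K + 1 : ℕ) : ℝ≥0∞) * n k)⁻¹ • Measure.dirac ((s (z k i) : EReal))) K
  -- `hcpThreshold` carries the test group's total mass `1/(K+1)` at `+∞`
  have hmass : (((K + 1 : ℕ) : ℝ≥0∞))⁻¹
      = ∑ i ∈ Finset.range (n K), (((K + 1 : ℕ) : ℝ≥0∞) * n K)⁻¹ := by
    rw [Finset.sum_const, Finset.card_range, nsmul_eq_mul,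
      ENNReal.mul_inv (Or.inr (ENNReal.natCast_ne_top _)) (Or.inl (ENNReal.natCast_ne_top _)),
      mul_left_comm, ENNReal.mul_inv_cancel (Nat.cast_ne_zero.2 (by omega))
        (ENNReal.natCast_ne_top _), mul_one]
  rw [hcpThreshold, hsplit]
  refine erealQuantile_le_erealQuantile fun t => ?_
  rw [Nat.sub_zero, ← Finset.range_eq_Ico, Measure.add_apply, Measure.add_apply, hmass,
    Finset.sum_smul]
  refine add_le_add le_rfl ?_
  simp only [Measure.coe_finsetSum, Finset.sum_apply, Measure.smul_apply, smul_eq_mul]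
  exact Finset.sum_le_sum fun i _ =>
    mul_le_mul_of_nonneg_left (dirac_top_Iic_le _ t) zero_le

theorem hier_full_conformal_coverage_general
    {𝒳 𝒴 Ω : Type*} [MeasurableSpace 𝒳] [MeasurableSpace 𝒴] [MeasurableSpace Ω]
    (P : Measure Ω) [IsProbabilityMeasure P]
    (K : ℕ)
    (N : ℕ → Ω → ℕ) (Z : ℕ → ℕ → Ω → 𝒳 × 𝒴)
    (hN : ∀ k ω, 1 ≤ N k ω)
    (hNmeas : ∀ k, Measurable (N k)) (hZmeas : ∀ k i, Measurable (Z k i))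
    (hexch : HierExch (K + 1) P N Z)
    (α : ℝ) (hα₀ : 0 < α)
    (𝒜 : (Fin (K + 1) → ℕ × (ℕ → 𝒳 × 𝒴)) → 𝒳 × 𝒴 → ℝ)
    (h𝒜 : Measurable fun p : (Fin (K + 1) → ℕ × (ℕ → 𝒳 × 𝒴)) × (𝒳 × 𝒴) => 𝒜 p.1 p.2)
    (hsym : HierInvariant (K + 1) 𝒜) :
    ENNReal.ofReal (1 - α) ≤
      P {ω | ∃ z : ℕ × (ℕ → 𝒳 × 𝒴), 1 ≤ z.1 ∧ z.2 0 = Z K 0 ω ∧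
        ((𝒜 (fun k : Fin (K + 1) =>
              if k.1 < K then (N k.1 ω, fun i => Z k.1 i ω) else z) (z.2 0) : EReal)
          ≤ hcpThreshold α 0 K (fun k => N k ω)
              fun k i => 𝒜 (fun k' : Fin (K + 1) =>
                if k'.1 < K then (N k'.1 ω, fun i' => Z k'.1 i' ω) else z) (Z k i ω))} := by
  have hD := measurable_hierData (L := K + 1) hNmeas hZmeas
  have : IsProbabilityMeasure (P.map (hierData (K + 1) N Z)) :=
    Measure.isProbabilityMeasure_map hD.aemeasurable
  have hcov := ofReal_le_measure_coverSet h𝒜 hsym (ae_one_le_map_hierData hN hD)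
    (hexch.map_comp_perm hD) (Fin.last K)
    (hexch.map_restrict_permGroup hNmeas hZmeas (Fin.last K)) (by linarith : 1 - α ≤ 1)
  rw [Measure.map_apply hD (measurableSet_coverSet h𝒜 _ _ _)] at hcov
  refine hcov.trans (measure_mono fun ω hω => ⟨(N K ω, fun i => Z K i ω), hN K ω, rfl, ?_⟩)
  have hdata : (fun k : Fin (K + 1) => if k.1 < K then (N k.1 ω, fun i => Z k.1 i ω)
      else (N K ω, fun i => Z K i ω)) = hierData (K + 1) N Z ω := by
    funext k
    split_ifs with hk
    · rfl
    · simp [hierData, show k.1 = K by omega]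
  rw [hdata]
  exact hω.trans (erealQuantile_groupEmpirical_le_hcpThreshold α K (fun k => N k ω)
    (fun k i => Z k i ω) _ (hN K ω))

/-- **Theorem (Marginal coverage for hierarchical full conformal prediction).**
Under hierarchical exchangeability of the `K+1` groups (with test point the first
observation of group `K`), and with a hierarchically symmetric algorithm `𝒜` producing a
score function from the `K` data groups together with a candidate group `z̃`, the full
conformal prediction set `Ĉ(X_test) = {y : (X_test, y) ∈ P₁C̃}` satisfies
`P(Y_test ∈ Ĉ(X_test)) ≥ 1 - α`. -/
theorem hier_full_conformal_coverage
    {𝒳 𝒴 Ω : Type*} [MeasurableSpace 𝒳] [MeasurableSpace 𝒴] [MeasurableSpace Ω]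
    (P : Measure Ω) [IsProbabilityMeasure P]
    (K : ℕ)
    (N : ℕ → Ω → ℕ) (Z : ℕ → ℕ → Ω → 𝒳 × 𝒴)
    (hN : ∀ k ω, 1 ≤ N k ω)
    (hNmeas : ∀ k, Measurable (N k)) (hZmeas : ∀ k i, Measurable (Z k i))
    (hexch : HierExch (K + 1) P N Z)
    (α : ℝ) (hα₀ : 0 < α) (hα₁ : α < 1)
    (𝒜 : (Fin (K + 1) → ℕ × (ℕ → 𝒳 × 𝒴)) → 𝒳 × 𝒴 → ℝ)
    (h𝒜 : Measurable fun p : (Fin (K + 1) → ℕ × (ℕ → 𝒳 × 𝒴)) × (𝒳 × 𝒴) => 𝒜 p.1 p.2)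
    (hsym : HierInvariant (K + 1) 𝒜) :
    ENNReal.ofReal (1 - α) ≤
      P {ω | ∃ z : ℕ × (ℕ → 𝒳 × 𝒴), 1 ≤ z.1 ∧ z.2 0 = Z K 0 ω ∧
        ((𝒜 (fun k : Fin (K + 1) =>
              if k.1 < K then (N k.1 ω, fun i => Z k.1 i ω) else z) (z.2 0) : EReal)
          ≤ hcpThreshold α 0 K (fun k => N k ω)
              fun k i => 𝒜 (fun k' : Fin (K + 1) =>
                if k'.1 < K then (N k'.1 ω, fun i' => Z k'.1 i' ω) else z) (Z k i ω))} :=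
  hier_full_conformal_coverage_general P K N Z hN hNmeas hZmeas hexch α hα₀ 𝒜 h𝒜 hsym
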